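/- Under the preconditioner setup: λ_max( P̂^{-1/2} (A + μI) P̂^{-1/2} ) ≤ λ̂_k + μ + ‖E‖₂ + ‖ℰ‖₂. -/

import Mathlib

/-!
Write `P̂⁻¹ = S²` with `S = P̂^{-1/2}`. The matrices `a (I - ÛÛᵀ) + Û diag(f) Ûᵀ` multiply like
pairs `(a, f) ∈ ℝ × ℝᵏ` and are monotone in `(a, f)` for the Loewner order. With
`c = λ̂_k + μ`, the matrix `P̂⁻¹` is the pair `(1, c / (λ̂ᵢ + μ))`, its inverse `P̂` is
`(1, (λ̂ᵢ + μ) / c)`, and `Â_N + μI` is `(μ, λ̂ᵢ + μ) ≤ c P̂` since `μ ≤ c`. Conjugating by `S`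
gives `S (Â_N + μI) S ≤ c S P̂ S = c I`, while `P̂⁻¹ ≤ I` (as `c ≤ λ̂ᵢ + μ`) gives `‖S x‖ ≤ ‖x‖`,
so on unit vectors the Rayleigh quotient of `S (E + ℰ) S` is at most `‖E‖₂ + ‖ℰ‖₂`.
-/

open Matrix

/-- The spectral norm (largest singular value) of a real matrix,
as the `ℓ²→ℓ²` operator norm. -/
noncomputable def matSpectralNorm {m n : ℕ} (M : Matrix (Fin m) (Fin n) ℝ) : ℝ :=
  ‖LinearMap.toContinuousLinearMap (Matrix.toEuclideanLin M)‖

/-- The square root of a positive semidefinite matrix, as defined in the older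
Mathlib (`Matrix.PosSemidef.sqrt`, since removed). -/
noncomputable def Matrix.PosSemidef.sqrt {n : Type*} [Fintype n] [DecidableEq n]
    {𝕜 : Type*} [RCLike 𝕜] [PartialOrder 𝕜] {A : Matrix n n 𝕜} (hA : A.PosSemidef) : Matrix n n 𝕜 :=
  hA.1.eigenvectorUnitary.1 * diagonal ((↑) ∘ (√·) ∘ hA.1.eigenvalues) *
    (star hA.1.eigenvectorUnitary : Matrix n n 𝕜)

/-- The largest eigenvalue of a real symmetric matrix, as the supremum of the
Rayleigh quotient over the unit sphere. -/
noncomputable def lmax {n : ℕ} (M : Matrix (Fin n) (Fin n) ℝ) : ℝ :=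
  ⨆ x : Metric.sphere (0 : EuclideanSpace ℝ (Fin n)) 1,
    (inner ℝ (x : EuclideanSpace ℝ (Fin n))
      (Matrix.toEuclideanLin M (x : EuclideanSpace ℝ (Fin n))) : ℝ)

/-- The smallest eigenvalue of a real symmetric matrix, as the infimum of the
Rayleigh quotient over the unit sphere. -/
noncomputable def lmin {n : ℕ} (M : Matrix (Fin n) (Fin n) ℝ) : ℝ :=
  ⨅ x : Metric.sphere (0 : EuclideanSpace ℝ (Fin n)) 1,
    (inner ℝ (x : EuclideanSpace ℝ (Fin n))
      (Matrix.toEuclideanLin M (x : EuclideanSpace ℝ (Fin n))) : ℝ)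

open scoped MatrixOrder InnerProductSpace

namespace Matrix

lemma PosSemidef.sqrt_mul_self {n : Type*} [Fintype n] [DecidableEq n] {P : Matrix n n ℝ}
    (hP : P.PosSemidef) : hP.sqrt * hP.sqrt = P := by
  have hV : (star hP.1.eigenvectorUnitary : Matrix n n ℝ) *
      (hP.1.eigenvectorUnitary : Matrix n n ℝ) = 1 :=
    Unitary.coe_star_mul_self _
  conv_rhs => rw [hP.1.spectral_theorem, Unitary.conjStarAlgAut_apply]
  simp only [PosSemidef.sqrt, ← Matrix.mul_assoc]
  rw [Matrix.mul_assoc _ _ (hP.1.eigenvectorUnitary : Matrix n n ℝ), hV,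
    Matrix.mul_one, Matrix.mul_assoc (hP.1.eigenvectorUnitary : Matrix n n ℝ),
    diagonal_mul_diagonal]
  congr 3
  funext i
  simp [Real.mul_self_sqrt (hP.eigenvalues_nonneg i)]

lemma PosSemidef.posSemidef_sqrt {n : Type*} [Fintype n] [DecidableEq n] {P : Matrix n n ℝ}
    (hP : P.PosSemidef) : hP.sqrt.PosSemidef := by
  have hD : (diagonal ((↑) ∘ (√·) ∘ hP.1.eigenvalues) : Matrix n n ℝ).PosSemidef :=
    posSemidef_diagonal_iff.2 fun i => Real.sqrt_nonneg _
  rw [PosSemidef.sqrt, star_eq_conjTranspose]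
  exact hD.mul_mul_conjTranspose_same _

variable {m n : Type*} [Fintype m] [DecidableEq m] [DecidableEq n]

/-- For `U` with orthonormal columns, the symmetric matrix with eigenvalue `f i` on the `i`-th
column of `U` and eigenvalue `a` on the orthogonal complement of the columns. -/
def orthoDiag (U : Matrix n m ℝ) (a : ℝ) (f : m → ℝ) : Matrix n n ℝ :=
  a • (1 - U * Uᵀ) + U * diagonal f * Uᵀ

lemma smul_one_eq_orthoDiag (U : Matrix n m ℝ) (a : ℝ) :
    a • (1 : Matrix n n ℝ) = orthoDiag U a fun _ => a := by
  simp only [orthoDiag, ← smul_one_eq_diagonal, Matrix.mul_smul, Matrix.mul_one, Matrix.smul_mul]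
  module

lemma orthoDiag_one_one (U : Matrix n m ℝ) : orthoDiag U 1 1 = 1 :=
  (smul_one_eq_orthoDiag U 1).symm.trans (one_smul _ _)

lemma smul_orthoDiag (U : Matrix n m ℝ) (c a : ℝ) (f : m → ℝ) :
    c • orthoDiag U a f = orthoDiag U (c * a) (c • f) := by
  simp only [orthoDiag, diagonal_smul, Matrix.mul_smul, Matrix.smul_mul, smul_add, smul_smul]

lemma orthoDiag_sub_orthoDiag (U : Matrix n m ℝ) (a b : ℝ) (f g : m → ℝ) :
    orthoDiag U a f - orthoDiag U b g = orthoDiag U (a - b) (f - g) := by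
  simp only [orthoDiag, Pi.sub_def, ← diagonal_sub, Matrix.mul_sub, Matrix.sub_mul, sub_smul]
  abel

lemma transpose_orthoDiag (U : Matrix n m ℝ) (a : ℝ) (f : m → ℝ) :
    (orthoDiag U a f)ᵀ = orthoDiag U a f := by
  simp [orthoDiag, Matrix.mul_assoc]

lemma mul_diagonal_mul_transpose_add_smul_one_eq_orthoDiag (U : Matrix n m ℝ) (lam : m → ℝ)
    (μ : ℝ) : U * diagonal lam * Uᵀ + μ • 1 = orthoDiag U μ fun i => lam i + μ := by
  rw [orthoDiag, ← diagonal_add]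
  simp only [← smul_one_eq_diagonal, Matrix.mul_add, Matrix.add_mul, Matrix.mul_smul,
    Matrix.mul_one, Matrix.smul_mul]
  module

lemma one_sub_mul_transpose_add_smul_inv_eq_orthoDiag (U : Matrix n m ℝ) (lam : m → ℝ)
    {μ : ℝ} (c : ℝ) (h : ∀ i, lam i + μ ≠ 0) :
    1 - U * Uᵀ + c • (U * (diagonal lam + μ • 1)⁻¹ * Uᵀ) =
      orthoDiag U 1 fun i => c / (lam i + μ) := by
  have hinv : (diagonal lam + μ • 1)⁻¹ = diagonal fun i => (lam i + μ)⁻¹ := by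
    rw [smul_one_eq_diagonal, diagonal_add]
    refine inv_eq_left_inv ?_
    rw [diagonal_mul_diagonal, ← diagonal_one]
    exact congrArg diagonal (funext fun i => inv_mul_cancel₀ (h i))
  rw [hinv, orthoDiag, one_smul, ← Matrix.smul_mul, ← Matrix.mul_smul, ← diagonal_smul]
  rfl

variable [Fintype n] {U : Matrix n m ℝ}

lemma orthoDiag_mul_orthoDiag (hU : Uᵀ * U = 1) (a b : ℝ) (f g : m → ℝ) :
    orthoDiag U a f * orthoDiag U b g = orthoDiag U (a * b) (f * g) := by
  have hUU (X : Matrix m n ℝ) : Uᵀ * (U * X) = X := by rw [← Matrix.mul_assoc, hU, Matrix.one_mul]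
  have hPU (X : Matrix m n ℝ) : (1 - U * Uᵀ) * (U * X) = 0 := by
    rw [Matrix.sub_mul, Matrix.mul_assoc, hUU, Matrix.one_mul, sub_self]
  have hUP : Uᵀ * (1 - U * Uᵀ) = 0 := by
    rw [Matrix.mul_sub, Matrix.mul_one, ← Matrix.mul_assoc, hU, Matrix.one_mul, sub_self]
  have hPP : (1 - U * Uᵀ) * (1 - U * Uᵀ) = 1 - U * Uᵀ := by
    rw [Matrix.mul_sub (1 - U * Uᵀ), hPU, Matrix.mul_one, sub_zero]
  simp only [orthoDiag, Matrix.add_mul, Matrix.mul_add, Matrix.smul_mul, Matrix.mul_smul,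
    Matrix.mul_assoc, hUU, hPU, hUP, hPP, Matrix.mul_zero, smul_zero]
  rw [← Matrix.mul_assoc (diagonal f), diagonal_mul_diagonal, add_zero, zero_add, smul_smul, mul_comm b a]
  rfl

lemma posSemidef_orthoDiag (hU : Uᵀ * U = 1) {a : ℝ} {f : m → ℝ} (ha : 0 ≤ a) (hf : 0 ≤ f) :
    (orthoDiag U a f).PosSemidef := by
  have hP : (1 - U * Uᵀ : Matrix n n ℝ).PosSemidef := by
    have h := posSemidef_self_mul_conjTranspose (orthoDiag U 1 0)
    rw [conjTranspose_eq_transpose_of_trivial, transpose_orthoDiag, orthoDiag_mul_orthoDiag hU,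
      mul_one, mul_zero] at h
    simpa [orthoDiag] using h
  have hD := (posSemidef_diagonal_iff.2 hf).mul_mul_conjTranspose_same U
  rw [conjTranspose_eq_transpose_of_trivial] at hD
  exact (hP.smul ha).add hD

lemma orthoDiag_mono (hU : Uᵀ * U = 1) {a b : ℝ} {f g : m → ℝ} (hab : a ≤ b) (hfg : f ≤ g) :
    orthoDiag U a f ≤ orthoDiag U b g := by
  rw [le_iff, orthoDiag_sub_orthoDiag]
  exact posSemidef_orthoDiag hU (sub_nonneg.2 hab) (sub_nonneg.2 hfg)

variable {S : Matrix n n ℝ} {c : ℝ} {d : m → ℝ}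

lemma mul_self_le_one_of_eq_orthoDiag (hU : Uᵀ * U = 1)
    (hSS : S * S = orthoDiag U 1 fun i => c / d i) (hc : 0 < c) (hcd : ∀ i, c ≤ d i) :
    S * S ≤ 1 := by
  rw [hSS, ← orthoDiag_one_one U]
  exact orthoDiag_mono hU le_rfl fun i => (div_le_one (hc.trans_le (hcd i))).2 (hcd i)

lemma mul_orthoDiag_mul_le_smul_one_of_eq_orthoDiag (hU : Uᵀ * U = 1) (hS : S.IsHermitian)
    (hSS : S * S = orthoDiag U 1 fun i => c / d i) (hc : c ≠ 0) (hd : ∀ i, d i ≠ 0)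
    {μ : ℝ} (hμ : μ ≤ c) : S * orthoDiag U μ d * S ≤ c • 1 := by
  -- `S * (S * Q) = 1` for `Q = orthoDiag U 1 (d / c)`, and a right inverse of `S` is a left one.
  have hSQS : S * orthoDiag U 1 (fun i => d i / c) * S = 1 := by
    rw [mul_eq_one_comm, ← Matrix.mul_assoc, hSS, orthoDiag_mul_orthoDiag hU, one_mul,
      ← orthoDiag_one_one U]
    refine congrArg _ (funext fun i => ?_)
    have := hd i
    simp only [Pi.mul_apply, Pi.one_apply]
    field_simp
  calc S * orthoDiag U μ d * S ≤ S * (c • orthoDiag U 1 fun i => d i / c) * S := by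
        rw [smul_orthoDiag, mul_one]
        exact hS.isSelfAdjoint.conjugate_le_conjugate
          (orthoDiag_mono hU hμ fun i => (mul_div_cancel₀ (d i) hc).ge)
    _ = c • 1 := by rw [Matrix.mul_smul, Matrix.smul_mul, hSQS]

end Matrix

section Rayleigh

variable {n : Type*} [Fintype n] [DecidableEq n]

lemma inner_toEuclideanLin_le_of_le {A B : Matrix n n ℝ} (h : A ≤ B) (x : EuclideanSpace ℝ n) :
    ⟪x, toEuclideanLin A x⟫_ℝ ≤ ⟪x, toEuclideanLin B x⟫_ℝ := by
  have := (isPositive_toEuclideanLin_iff.2 h).inner_nonneg_right x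
  rw [map_sub, LinearMap.sub_apply, inner_sub_right] at this
  linarith

lemma inner_toEuclideanLin_smul_one (c : ℝ) (x : EuclideanSpace ℝ n) :
    ⟪x, toEuclideanLin (c • 1 : Matrix n n ℝ) x⟫_ℝ = c * ‖x‖ ^ 2 := by
  simp [inner_smul_right]

lemma inner_toEuclideanLin_one (x : EuclideanSpace ℝ n) :
    ⟪x, toEuclideanLin (1 : Matrix n n ℝ) x⟫_ℝ = ‖x‖ ^ 2 := by
  simp

lemma inner_toEuclideanLin_mul_mul_self {S : Matrix n n ℝ} (hS : S.IsHermitian)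
    (N : Matrix n n ℝ) (x : EuclideanSpace ℝ n) :
    ⟪x, toEuclideanLin (S * N * S) x⟫_ℝ =
      ⟪toEuclideanLin S x, toEuclideanLin N (toEuclideanLin S x)⟫_ℝ := by
  rw [isSymmetric_toEuclideanLin_iff.2 hS]
  simp

end Rayleigh

lemma matSpectralNorm_add_le {m n : ℕ} (E F : Matrix (Fin m) (Fin n) ℝ) :
    matSpectralNorm (E + F) ≤ matSpectralNorm E + matSpectralNorm F := by
  simp only [matSpectralNorm, map_add]
  exact norm_add_le _ _

lemma inner_toEuclideanLin_le_matSpectralNorm_mul {n : ℕ} (N : Matrix (Fin n) (Fin n) ℝ)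
    (y : EuclideanSpace ℝ (Fin n)) :
    ⟪y, toEuclideanLin N y⟫_ℝ ≤ matSpectralNorm N * ‖y‖ ^ 2 :=
  calc ⟪y, toEuclideanLin N y⟫_ℝ ≤ ‖y‖ * ‖toEuclideanLin N y‖ := real_inner_le_norm _ _
    _ ≤ ‖y‖ * (matSpectralNorm N * ‖y‖) :=
      mul_le_mul_of_nonneg_left ((toEuclideanLin N).toContinuousLinearMap.le_opNorm y)
        (norm_nonneg y)
    _ = matSpectralNorm N * ‖y‖ ^ 2 := by ring

-- `0 ≤ a` covers `n = 0`, where the sphere is empty and the supremum is `0`.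
lemma lmax_le_of_forall_inner_le {n : ℕ} {M : Matrix (Fin n) (Fin n) ℝ} {a : ℝ} (ha : 0 ≤ a)
    (h : ∀ x : EuclideanSpace ℝ (Fin n), ‖x‖ = 1 → ⟪x, toEuclideanLin M x⟫_ℝ ≤ a) :
    lmax M ≤ a :=
  Real.iSup_le (fun x => h x (by simp)) ha

lemma lmax_mul_add_mul_le {n : ℕ} {S B N : Matrix (Fin n) (Fin n) ℝ} {c : ℝ}
    (hS : S.IsHermitian) (hSS : S * S ≤ 1) (hB : S * B * S ≤ c • 1) (hc : 0 ≤ c) :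
    lmax (S * (B + N) * S) ≤ c + matSpectralNorm N := by
  refine lmax_le_of_forall_inner_le (add_nonneg hc (norm_nonneg _)) fun x hx => ?_
  set y := toEuclideanLin S x
  have hy : ‖y‖ ^ 2 ≤ 1 := by
    have h := inner_toEuclideanLin_le_of_le hSS x
    have h1 := inner_toEuclideanLin_mul_mul_self hS 1 x
    rw [Matrix.mul_one] at h1
    rwa [h1, inner_toEuclideanLin_one, inner_toEuclideanLin_one, hx, one_pow] at h
  have hBx := inner_toEuclideanLin_le_of_le hB x
  rw [inner_toEuclideanLin_smul_one, hx, one_pow, mul_one] at hBx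
  calc ⟪x, toEuclideanLin (S * (B + N) * S) x⟫_ℝ
      = ⟪x, toEuclideanLin (S * B * S) x⟫_ℝ + ⟪y, toEuclideanLin N y⟫_ℝ := by
        rw [Matrix.mul_add, Matrix.add_mul, map_add, LinearMap.add_apply, inner_add_right,
          inner_toEuclideanLin_mul_mul_self hS N]
    _ ≤ c + matSpectralNorm N * 1 := add_le_add hBx
        ((inner_toEuclideanLin_le_matSpectralNorm_mul N y).trans
          (mul_le_mul_of_nonneg_left hy (norm_nonneg _)))
    _ = c + matSpectralNorm N := by rw [mul_one]

/-- Preconditioner setup: `n > k ≥ 1`, `A` real symmetric with `A + μI` positive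
definite (`μ ≥ 0`), `Û` with orthonormal columns (`ÛᵀÛ = I`),
`Θ̂ = diag(λ̂_1,…,λ̂_k)` with `λ̂_1 ≥ … ≥ λ̂_k > 0`, `Â_N = Û Θ̂ Ûᵀ`,
`A = Â_N + E + ℰ` with `E, ℰ` symmetric and `E` positive semidefinite, and
`P̂⁻¹ = I − ÛÛᵀ + (λ̂_k + μ) Û (Θ̂ + μI)⁻¹ Ûᵀ`, which is symmetric positive definite;
`P̂^{-1/2}` is its positive semidefinite square root.
Then `λ_max(P̂^{-1/2}(A + μI)P̂^{-1/2}) ≤ λ̂_k + μ + ‖E‖₂ + ‖ℰ‖₂`. -/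
theorem stmt12 {n k : ℕ} (hk : 1 ≤ k)
    (A : Matrix (Fin n) (Fin n) ℝ)
    (μ : ℝ) (hμ : 0 ≤ μ)
    (U : Matrix (Fin n) (Fin k) ℝ) (hU : Uᵀ * U = 1)
    (lamh : Fin k → ℝ) (hlamh : Antitone lamh) (hlamhk : 0 < lamh ⟨k - 1, by omega⟩)
    (E Err : Matrix (Fin n) (Fin n) ℝ)
    (hsum : A = U * Matrix.diagonal lamh * Uᵀ + E + Err)
    (hPinvPD : ((1 : Matrix (Fin n) (Fin n) ℝ) - U * Uᵀ +
      (lamh ⟨k - 1, by omega⟩ + μ) • (U * (Matrix.diagonal lamh + μ • 1)⁻¹ * Uᵀ)).PosDef)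
     :
    let S := hPinvPD.posSemidef.sqrt
    let M := S * (A + μ • 1) * S
    lmax M ≤ lamh ⟨k - 1, by omega⟩ + μ + matSpectralNorm E + matSpectralNorm Err := by
  intro S M
  set c := lamh ⟨k - 1, by omega⟩ + μ
  set d : Fin k → ℝ := fun i => lamh i + μ
  have hc : 0 < c := by positivity
  have hcd (i : Fin k) : c ≤ d i := by
    simp only [c, d]
    gcongr
    exact hlamh (Fin.le_def.2 (Nat.le_pred_of_lt i.2))
  have hSh : S.IsHermitian := hPinvPD.posSemidef.posSemidef_sqrt.isHermitian
  have hSS : S * S = orthoDiag U 1 fun i => c / d i :=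
    hPinvPD.posSemidef.sqrt_mul_self.trans
      (one_sub_mul_transpose_add_smul_inv_eq_orthoDiag U lamh c fun i =>
        (hc.trans_le (hcd i)).ne')
  calc lmax M = lmax (S * (orthoDiag U μ d + (E + Err)) * S) := by
        rw [← mul_diagonal_mul_transpose_add_smul_one_eq_orthoDiag U lamh μ]
        simp only [M, hsum]
        congr 3
        abel
    _ ≤ c + matSpectralNorm (E + Err) :=
        lmax_mul_add_mul_le hSh (mul_self_le_one_of_eq_orthoDiag hU hSS hc hcd)
          (mul_orthoDiag_mul_le_smul_one_of_eq_orthoDiag hU hSh hSS hc.ne'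
            (fun i => (hc.trans_le (hcd i)).ne') (by linarith)) hc.le
    _ ≤ c + matSpectralNorm E + matSpectralNorm Err := by
        linarith [matSpectralNorm_add_le E Err]
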